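/- Let H be a complex Hilbert space and P : D(P) → H a symmetric linear operator. Let (u_m), (v_m) be sequences in D(P) with ‖u_m‖ = ‖v_m‖ = 1, and (λ_m), (μ_m) sequences of complex numbers such that ‖P u_m - λ_m u_m‖ = O(m^{-∞}) and ‖P v_m - μ_m v_m‖ = O(m^{-∞}). Suppose there exists z₀ ∈ ℂ, z₀ ≠ 0, with ⟨u_m, v_m⟩ = z₀ + O(m⁻¹). Then λ_m - conj(μ_m) = O(m^{-∞}), i.e. for every N there exists c_N with |λ_m - conj(μ_m)| ≤ c_N m^{-N} for all m ≥ 1. -/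

import Mathlib

open Filter Asymptotics Topology
open scoped InnerProductSpace ComplexConjugate

/-!
Symmetry of `P` gives the exact identity
`(conj λ - μ) ⟪u, v⟫ = ⟪u, P v - μ v⟫ - ⟪P u - λ u, v⟫`, so `|λ_m - conj μ_m| |⟪u_m, v_m⟫|` is
bounded by the two residuals. Since `⟪u_m, v_m⟫ → z₀ ≠ 0`, the overlap can be divided out for
large `m`, and the finitely many remaining indices only change the constant.
-/

theorem exists_pos_forall_norm_le_div_pow_iff_isBigO {E : Type*} [SeminormedAddCommGroup E]
    {f : ℕ → E} {N : ℕ} :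
    (∃ C > 0, ∀ m : ℕ, 1 ≤ m → ‖f m‖ ≤ C / (m : ℝ) ^ N) ↔
      f =O[atTop] fun m => ((m : ℝ) ^ N)⁻¹ := by
  constructor
  · rintro ⟨C, -, hC⟩
    refine IsBigO.of_bound C ?_
    filter_upwards [eventually_ge_atTop 1] with m hm
    simpa [div_eq_mul_inv] using hC m hm
  · intro hf
    obtain ⟨C, hC, hbound⟩ := bound_of_isBigO_nat_atTop hf
    refine ⟨C, hC, fun m hm => ?_⟩
    have hm' : ((m : ℝ) ^ N)⁻¹ ≠ 0 := by positivity
    simpa [div_eq_mul_inv] using hbound hm'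

theorem Asymptotics.IsBigO.of_mul_tendsto_ne_zero {α 𝕜 : Type*} [NormedField 𝕜] {l : Filter α}
    {a w : α → 𝕜} {r : α → ℝ} {z : 𝕜} (hz : z ≠ 0) (hw : Tendsto w l (𝓝 z))
    (h : (fun x => a x * w x) =O[l] r) : a =O[l] r := by
  have hinv : (fun x => (w x)⁻¹) =O[l] fun _ => (1 : ℝ) := (hw.inv₀ hz).isBigO_one ℝ
  have hcancel : (fun x => a x * w x * (w x)⁻¹) =ᶠ[l] a := by
    filter_upwards [hw.eventually_ne hz] with x hx
    field_simp
  simpa using (h.mul hinv).congr' hcancel (by simp)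

section SymmetricOperator

variable {𝕜 H : Type*} [RCLike 𝕜] [NormedAddCommGroup H] [InnerProductSpace 𝕜 H]
  {D : Submodule 𝕜 H} {P : D →ₗ[𝕜] H}

theorem conj_sub_mul_inner_eq (hP : ∀ x y : D, ⟪P x, (y : H)⟫_𝕜 = ⟪(x : H), P y⟫_𝕜)
    (x y : D) (a b : 𝕜) :
    (conj a - b) * ⟪(x : H), y⟫_𝕜 = ⟪(x : H), P y - b • (y : H)⟫_𝕜 - ⟪P x - a • (x : H), y⟫_𝕜 := by
  rw [inner_sub_right, inner_sub_left, inner_smul_right, inner_smul_left, hP]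
  ring

theorem norm_sub_conj_mul_norm_inner_le (hP : ∀ x y : D, ⟪P x, (y : H)⟫_𝕜 = ⟪(x : H), P y⟫_𝕜)
    (x y : D) (a b : 𝕜) :
    ‖a - conj b‖ * ‖⟪(x : H), y⟫_𝕜‖ ≤
      ‖(x : H)‖ * ‖P y - b • (y : H)‖ + ‖P x - a • (x : H)‖ * ‖(y : H)‖ := by
  have hconj : ‖a - conj b‖ = ‖conj a - b‖ := by
    rw [← RCLike.norm_conj (conj a - b), map_sub, RCLike.conj_conj]
  calc ‖a - conj b‖ * ‖⟪(x : H), y⟫_𝕜‖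
      = ‖⟪(x : H), P y - b • (y : H)⟫_𝕜 - ⟪P x - a • (x : H), y⟫_𝕜‖ := by
        rw [hconj, ← norm_mul, conj_sub_mul_inner_eq hP]
    _ ≤ ‖⟪(x : H), P y - b • (y : H)⟫_𝕜‖ + ‖⟪P x - a • (x : H), y⟫_𝕜‖ := norm_sub_le _ _
    _ ≤ _ := by gcongr <;> exact norm_inner_le_norm _ _

end SymmetricOperator

/-- Abstract uniqueness lemma for quasi-resonances of a symmetric operator:
if two quasi-pairs have overlaps bounded away from zero, the quasi-resonances
agree up to conjugation modulo O(m^{-∞}). -/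
theorem stmt_5 (H : Type*) [NormedAddCommGroup H] [InnerProductSpace ℂ H]
    (D : Submodule ℂ H) (P : D →ₗ[ℂ] H)
    (hsym : ∀ x y : D, ⟪P x, (y : H)⟫_ℂ = ⟪(x : H), P y⟫_ℂ)
    (u v : ℕ → D) (hu : ∀ m, ‖(u m : H)‖ = 1) (hv : ∀ m, ‖(v m : H)‖ = 1)
    (lam mu : ℕ → ℂ)
    (hlu : ∀ N : ℕ, ∃ C > 0, ∀ m : ℕ, 1 ≤ m →
      ‖P (u m) - lam m • (u m : H)‖ ≤ C / (m : ℝ) ^ N)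
    (hmv : ∀ N : ℕ, ∃ C > 0, ∀ m : ℕ, 1 ≤ m →
      ‖P (v m) - mu m • (v m : H)‖ ≤ C / (m : ℝ) ^ N)
    (z0 : ℂ) (hz0 : z0 ≠ 0)
    (hover : ∃ C > 0, ∀ m : ℕ, 1 ≤ m →
      ‖⟪(u m : H), (v m : H)⟫_ℂ - z0‖ ≤ C / (m : ℝ)) :
    ∀ N : ℕ, ∃ c > 0, ∀ m : ℕ, 1 ≤ m →
      ‖lam m - conj (mu m)‖ ≤ c / (m : ℝ) ^ N := by
  intro N
  have hoverlap : Tendsto (fun m => ⟪(u m : H), (v m : H)⟫_ℂ) atTop (𝓝 z0) := by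
    have hO := (exists_pos_forall_norm_le_div_pow_iff_isBigO (N := 1)
      (f := fun m => ⟪(u m : H), (v m : H)⟫_ℂ - z0)).1 (by simpa using hover)
    simpa using (hO.trans_tendsto (by simpa using tendsto_inv_atTop_nhds_zero_nat)).add_const z0
  have hresidual := (exists_pos_forall_norm_le_div_pow_iff_isBigO.1 (hmv N)).norm_left.add
    (exists_pos_forall_norm_le_div_pow_iff_isBigO.1 (hlu N)).norm_left
  refine exists_pos_forall_norm_le_div_pow_iff_isBigO.2 <|
    IsBigO.of_mul_tendsto_ne_zero hz0 hoverlap <| IsBigO.trans ?_ hresidual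
  refine IsBigO.of_bound 1 (Eventually.of_forall fun m => ?_)
  simpa [norm_mul, hu, hv] using
    (norm_sub_conj_mul_norm_inner_le hsym (u m) (v m) (lam m) (mu m)).trans (le_abs_self _)
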